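/- Let R be a commutative integral domain and let ⋆ be a semistar operation on R that is stable and of finite type. Let I be a nonzero ideal of R such that I^⋆ ∩ R ≠ R. Then ⋆-Min(I) = Min(I^⋆ ∩ R), i.e., the set of quasi-⋆-prime ideals minimal over I coincides with the set of prime ideals minimal over I^⋆ ∩ R. -/

import Mathlib

open Pointwise

/-- A semistar operation on an integral domain `R` with quotient field `K`:
a map `E ↦ E^⋆` on the nonzero `R`-submodules of `K` satisfying the usual axioms.
(The map is defined on all submodules, but the axioms are only required for the
nonzero ones.) -/
structure SemistarOperation (R K : Type*) [CommRing R] [IsDomain R] [Field K]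
    [Algebra R K] [IsFractionRing R K] where
  star : Submodule R K → Submodule R K
  smul_star : ∀ (x : K), x ≠ 0 → ∀ E : Submodule R K, E ≠ ⊥ → star (x • E) = x • star E
  mono : ∀ E F : Submodule R K, E ≠ ⊥ → E ≤ F → star E ≤ star F
  le_star : ∀ E : Submodule R K, E ≠ ⊥ → E ≤ star E
  star_star : ∀ E : Submodule R K, E ≠ ⊥ → star (star E) = star E

namespace SemistarOperation

variable {R K : Type*} [CommRing R] [IsDomain R] [Field K] [Algebra R K] [IsFractionRing R K]
variable (s : SemistarOperation R K)

/-- `⋆` is of finite type: for every nonzero submodule `E`, the module `E^⋆` is the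
union of the `F^⋆` over the nonzero finitely generated submodules `F ⊆ E`. -/
def FiniteType : Prop :=
  ∀ E : Submodule R K, E ≠ ⊥ → ∀ x : K,
    x ∈ s.star E ↔ ∃ F : Submodule R K, F.FG ∧ F ≠ ⊥ ∧ F ≤ E ∧ x ∈ s.star F

/-- `I^⋆`, for an ideal `I` of `R` (viewing `I` as a submodule of `K`). -/
def idealStar (I : Ideal R) : Submodule R K :=
  s.star (Submodule.map (Algebra.linearMap R K) I)

/-- `I^⋆ ∩ R`, as an ideal of `R`. -/
def contract (I : Ideal R) : Ideal R :=
  Submodule.comap (Algebra.linearMap R K) (s.idealStar I)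

/-- A (nonzero) ideal `I` of `R` is a quasi-`⋆`-ideal if `I^⋆ ∩ R = I`. -/
def IsQuasiStarIdeal (I : Ideal R) : Prop :=
  I ≠ ⊥ ∧ s.contract I = I

/-- A nonzero ideal `L` of `R` is `⋆`-finite if `L^⋆ = F^⋆` for some nonzero
finitely generated ideal `F` of `R`. -/
def IsStarFinite (L : Ideal R) : Prop :=
  L ≠ ⊥ ∧ ∃ F : Ideal R, F.FG ∧ F ≠ ⊥ ∧ s.idealStar F = s.idealStar L

/-- `⋆` is stable: it distributes over finite intersections (of nonzero submodules
with nonzero intersection). -/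
def Stable : Prop :=
  ∀ E F : Submodule R K, E ≠ ⊥ → F ≠ ⊥ → E ⊓ F ≠ ⊥ →
    s.star (E ⊓ F) = s.star E ⊓ s.star F

/-- `⋆-Min(I)`: the set of quasi-`⋆`-prime ideals of `R` minimal over `I`. -/
def starMin (I : Ideal R) : Set (Ideal R) :=
  {P | Minimal (fun Q : Ideal R => Q.IsPrime ∧ s.IsQuasiStarIdeal Q ∧ I ≤ Q) P}

/-- A nonzero ideal `I` of `R` is a `⋆`-SFT-ideal if there are a finitely generated
ideal `J ⊆ I` and a positive integer `k` with `a ^ k ∈ J^⋆` for every `a ∈ I^⋆`. -/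
def IsSFT (I : Ideal R) : Prop :=
  I ≠ ⊥ ∧ ∃ J : Ideal R, J.FG ∧ J ≤ I ∧ ∃ k : ℕ, 0 < k ∧
    ∀ a ∈ s.idealStar I, a ^ k ∈ s.idealStar J

/-- `R` is a `⋆`-SFT-ring if every nonzero ideal of `R` is a `⋆`-SFT-ideal. -/
def IsSFTRing : Prop := ∀ I : Ideal R, I ≠ ⊥ → s.IsSFT I

end SemistarOperation

/-! A prime `P` minimal over a quasi-`⋆`-ideal `J` is again a quasi-`⋆`-ideal. Indeed, if
`a ∈ P^⋆ ∩ R`, finite type yields a finitely generated `F ⊆ P` with `a ∈ F^⋆`. Minimality of `P`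
makes `P R_P` the radical of `J R_P`, so `u F^n ⊆ J` for some `u ∉ P` and some `n`; then
`u a^n ∈ (u F^n)^⋆ ∩ R ⊆ J^⋆ ∩ R = J ⊆ P`, whence `a ∈ P`.

Since `I^⋆ ∩ R` is a quasi-`⋆`-ideal, and a quasi-`⋆`-ideal contains `I` iff it contains
`I^⋆ ∩ R`, both sides of the theorem are the minimal members of one family of primes. -/

namespace Ideal

theorem map_algebraLinearMap_ne_bot {R A : Type*} [CommSemiring R] [Semiring A] [Algebra R A]
    [FaithfulSMul R A] {I : Ideal R} (hI : I ≠ ⊥) : Submodule.map (Algebra.linearMap R A) I ≠ ⊥ :=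
  (Submodule.map_injective_of_injective (FaithfulSMul.algebraMap_injective R A)).ne_iff'
    (Submodule.map_bot _) |>.2 hI

variable {R : Type*} [CommRing R]

theorem exists_notMem_forall_mul_mem_of_fg {J P G : Ideal R} [hP : P.IsPrime] (hG : G.FG)
    (h : ∀ x ∈ G, ∃ t ∉ P, t * x ∈ J) : ∃ u ∉ P, ∀ x ∈ G, u * x ∈ J := by
  induction G, hG using Submodule.fg_induction with
  | singleton g =>
    obtain ⟨t, htP, htg⟩ := h g (Submodule.mem_span_singleton_self g)
    refine ⟨t, htP, fun x hx => ?_⟩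
    obtain ⟨r, rfl⟩ := Submodule.mem_span_singleton.1 hx
    simpa only [smul_eq_mul, mul_left_comm] using J.mul_mem_left r htg
  | sup G₁ G₂ _ _ ih₁ ih₂ =>
    obtain ⟨u₁, hu₁, h₁⟩ := ih₁ fun x hx => h x (Submodule.mem_sup_left hx)
    obtain ⟨u₂, hu₂, h₂⟩ := ih₂ fun x hx => h x (Submodule.mem_sup_right hx)
    refine ⟨u₁ * u₂, hP.mul_notMem hu₁ hu₂, fun x hx => ?_⟩
    obtain ⟨y, hy, z, hz, rfl⟩ := Submodule.mem_sup.1 hx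
    rw [show u₁ * u₂ * (y + z) = u₂ * (u₁ * y) + u₁ * (u₂ * z) by ring]
    exact J.add_mem (J.mul_mem_left _ (h₁ y hy)) (J.mul_mem_left _ (h₂ z hz))

theorem exists_span_singleton_mul_pow_le_of_mem_minimalPrimes {J P F : Ideal R}
    (hP : P ∈ J.minimalPrimes) (hF : F.FG) (hFP : F ≤ P) :
    ∃ n, ∃ u ∉ P, span {u} * F ^ n ≤ J := by
  have := hP.isPrime
  let Rₚ := Localization.AtPrime P
  have hP_sat : P ≤ ((J.map (algebraMap R Rₚ)).under R).radical := by
    rw [under_def, ← comap_radical,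
      IsLocalization.AtPrime.radical_map_of_mem_minimalPrimes Rₚ P J hP,
      Localization.AtPrime.map_eq_maximalIdeal, ← under_def,
      Localization.AtPrime.under_maximalIdeal]
  obtain ⟨n, hn⟩ := exists_pow_le_of_le_radical_of_fg (hFP.trans hP_sat) hF
  obtain ⟨u, huP, hu⟩ := exists_notMem_forall_mul_mem_of_fg (J := J) (hF.pow (n := n)) fun x hx =>
    (IsLocalization.algebraMap_mem_map_algebraMap_iff P.primeCompl Rₚ J x).1 (hn hx)
  exact ⟨n, u, huP, span_singleton_mul_le_iff.2 hu⟩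

end Ideal

namespace SemistarOperation

variable {R K : Type*} [CommRing R] [IsDomain R] [Field K] [Algebra R K] [IsFractionRing R K]
variable (s : SemistarOperation R K)

theorem star_ne_bot {E : Submodule R K} (hE : E ≠ ⊥) : s.star E ≠ ⊥ :=
  ne_bot_of_le_ne_bot hE (s.le_star E hE)

theorem mul_star_le (E : Submodule R K) {F : Submodule R K} (hF : F ≠ ⊥) :
    E * s.star F ≤ s.star (E * F) := by
  refine Submodule.mul_le.2 fun x hx y hy => ?_
  rcases eq_or_ne x 0 with rfl | hx0
  · simp
  have hxF : x • F ≤ E * F := by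
    rintro _ ⟨z, hz, rfl⟩
    exact Submodule.mul_mem_mul hx hz
  have : x * y ∈ x • s.star F := Submodule.smul_mem_pointwise_smul y x _ hy
  rw [← s.smul_star x hx0 F hF] at this
  exact s.mono _ _ (fun h => hF (by rw [← inv_smul_smul₀ hx0 F, h, Submodule.smul_bot'])) hxF this

theorem star_mul_star_le {E F : Submodule R K} (hE : E ≠ ⊥) (hF : F ≠ ⊥) :
    s.star E * s.star F ≤ s.star (E * F) := by
  have hEF : E * F ≠ ⊥ := fun h => (Submodule.mul_eq_bot.1 h).elim hE hF
  calc s.star E * s.star F ≤ s.star (s.star E * F) := s.mul_star_le _ hF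
    _ ≤ s.star (s.star (E * F)) := by
      refine s.mono _ _ (fun h => (Submodule.mul_eq_bot.1 h).elim (s.star_ne_bot hE) hF) ?_
      rw [mul_comm, mul_comm E]
      exact s.mul_star_le F hE
    _ = s.star (E * F) := s.star_star _ hEF

theorem star_pow_le {E : Submodule R K} (hE : E ≠ ⊥) (n : ℕ) : s.star E ^ n ≤ s.star (E ^ n) := by
  induction n with
  | zero => simpa using s.le_star 1 (Submodule.zero_eq_bot (R := R) (M := K) ▸ one_ne_zero)
  | succ n ih =>
    calc s.star E ^ (n + 1) = s.star E ^ n * s.star E := pow_succ _ _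
      _ ≤ s.star (E ^ n) * s.star E := mul_le_mul_left ih _
      _ ≤ s.star (E ^ (n + 1)) := by
        rw [pow_succ]
        exact s.star_mul_star_le (pow_ne_zero n hE) hE

theorem idealStar_mono {I J : Ideal R} (hI : I ≠ ⊥) (h : I ≤ J) :
    s.idealStar I ≤ s.idealStar J :=
  s.mono _ _ (Ideal.map_algebraLinearMap_ne_bot hI) (Submodule.map_mono h)

theorem contract_mono {I J : Ideal R} (hI : I ≠ ⊥) (h : I ≤ J) : s.contract I ≤ s.contract J :=
  Submodule.comap_mono (s.idealStar_mono hI h)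

theorem le_contract {I : Ideal R} (hI : I ≠ ⊥) : I ≤ s.contract I := fun _ hx =>
  s.le_star _ (Ideal.map_algebraLinearMap_ne_bot hI) (Submodule.mem_map_of_mem hx)

theorem contract_le_of_le {I Q : Ideal R} (hI : I ≠ ⊥) (hQ : s.IsQuasiStarIdeal Q) (h : I ≤ Q) :
    s.contract I ≤ Q :=
  hQ.2 ▸ s.contract_mono hI h

theorem idealStar_contract {I : Ideal R} (hI : I ≠ ⊥) :
    s.idealStar (s.contract I) = s.idealStar I := by
  have hI' := Ideal.map_algebraLinearMap_ne_bot (A := K) hI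
  refine le_antisymm ?_ (s.idealStar_mono hI (s.le_contract hI))
  calc s.idealStar (s.contract I) ≤ s.star (s.idealStar I) :=
        s.mono _ _ (Ideal.map_algebraLinearMap_ne_bot (ne_bot_of_le_ne_bot hI (s.le_contract hI)))
          (Submodule.map_comap_le _ _)
    _ = s.idealStar I := s.star_star _ hI'

theorem isQuasiStarIdeal_contract {I : Ideal R} (hI : I ≠ ⊥) :
    s.IsQuasiStarIdeal (s.contract I) :=
  ⟨ne_bot_of_le_ne_bot hI (s.le_contract hI),
    congrArg (Submodule.comap _) (s.idealStar_contract hI)⟩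

theorem exists_fg_le_of_mem_contract (hs : s.FiniteType) {I : Ideal R} (hI : I ≠ ⊥) {a : R}
    (ha : a ∈ s.contract I) : ∃ F : Ideal R, F.FG ∧ F ≠ ⊥ ∧ F ≤ I ∧ a ∈ s.contract F := by
  obtain ⟨E, hEfg, hEbot, hEI, haE⟩ := (hs _ (Ideal.map_algebraLinearMap_ne_bot hI) _).1 ha
  have hinj := FaithfulSMul.algebraMap_injective R K
  have hE : Submodule.map (Algebra.linearMap R K) (E.comap (Algebra.linearMap R K)) = E :=
    Submodule.map_comap_eq_self (hEI.trans LinearMap.map_le_range)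
  refine ⟨E.comap _, Submodule.fg_of_fg_map_injective _ hinj (hE ▸ hEfg), fun h => hEbot ?_,
    (Submodule.comap_mono hEI).trans (Submodule.comap_map_eq_of_injective hinj I).le, ?_⟩
  · rw [← hE, h, Submodule.map_bot]
  · change _ ∈ s.star _
    rwa [hE]

theorem mul_pow_mem_contract {F : Ideal R} (hF : F ≠ ⊥) {a : R} (ha : a ∈ s.contract F)
    (u : R) (n : ℕ) : u * a ^ n ∈ s.contract (Ideal.span {u} * F ^ n) := by
  have hF' := Ideal.map_algebraLinearMap_ne_bot (A := K) hF
  change algebraMap R K (u * a ^ n) ∈ s.star (Submodule.map (Algebra.ofId R K).toLinearMap _)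
  rw [Submodule.map_mul, Submodule.map_pow, map_mul, map_pow]
  refine s.mul_star_le _ (pow_ne_zero n hF') (Submodule.mul_mem_mul
    (Submodule.mem_map_of_mem (Ideal.mem_span_singleton_self u)) ?_)
  exact s.star_pow_le hF' n (Submodule.pow_mem_pow _ (show algebraMap R K a ∈ s.star _ from ha) n)

theorem isQuasiStarIdeal_of_mem_minimalPrimes (hs : s.FiniteType) {J P : Ideal R}
    (hJ : s.IsQuasiStarIdeal J) (hP : P ∈ J.minimalPrimes) : s.IsQuasiStarIdeal P := by
  have hPbot : P ≠ ⊥ := ne_bot_of_le_ne_bot hJ.1 hP.1.2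
  refine ⟨hPbot, le_antisymm (fun a ha => ?_) (s.le_contract hPbot)⟩
  obtain ⟨F, hFfg, hFbot, hFP, haF⟩ := s.exists_fg_le_of_mem_contract hs hPbot ha
  obtain ⟨n, u, huP, huJ⟩ :=
    Ideal.exists_span_singleton_mul_pow_le_of_mem_minimalPrimes hP hFfg hFP
  have hu0 : u ≠ 0 := fun h => huP (h ▸ P.zero_mem)
  have huF : Ideal.span {u} * F ^ n ≠ ⊥ :=
    mul_ne_zero (by simpa using hu0) (pow_ne_zero n hFbot)
  have hua : u * a ^ n ∈ J :=
    s.contract_le_of_le huF hJ huJ (s.mul_pow_mem_contract hFbot haF u n)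
  exact hP.isPrime.mem_of_pow_mem n ((hP.isPrime.mem_or_mem (hP.1.2 hua)).resolve_left huP)

end SemistarOperation

theorem starMin_eq_minimalPrimes_contract_general {R K : Type*} [CommRing R] [IsDomain R]
    [Field K] [Algebra R K] [IsFractionRing R K] (s : SemistarOperation R K)
    (hs : s.FiniteType) (I : Ideal R) (hI : I ≠ ⊥) :
    s.starMin I = (s.contract I).minimalPrimes := by
  have hJ := s.isQuasiStarIdeal_contract hI
  ext P
  constructor
  · rintro ⟨⟨hPp, hPq, hIP⟩, hmin⟩
    refine ⟨⟨hPp, s.contract_le_of_le hI hPq hIP⟩, fun Q hQ hQP => ?_⟩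
    have := hQ.1
    obtain ⟨Q', hQ', hQ'Q⟩ := Ideal.exists_minimalPrimes_le hQ.2
    have hQ'_mem : Q'.IsPrime ∧ s.IsQuasiStarIdeal Q' ∧ I ≤ Q' :=
      ⟨hQ'.isPrime, s.isQuasiStarIdeal_of_mem_minimalPrimes hs hJ hQ',
        (s.le_contract hI).trans hQ'.1.2⟩
    exact (hmin hQ'_mem (hQ'Q.trans hQP)).trans hQ'Q
  · intro hP
    refine ⟨⟨hP.isPrime, s.isQuasiStarIdeal_of_mem_minimalPrimes hs hJ hP,
      (s.le_contract hI).trans hP.1.2⟩, fun Q hQ hQP => ?_⟩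
    exact hP.2 ⟨hQ.1, s.contract_le_of_le hI hQ.2.1 hQ.2.2⟩ hQP

/-- Let `⋆` be a stable semistar operation of finite type on the integral domain `R`,
and let `I` be a nonzero ideal of `R` with `I^⋆ ∩ R ≠ R`.  Then
`⋆-Min(I) = Min(I^⋆ ∩ R)`. -/
theorem starMin_eq_minimalPrimes_contract {R K : Type*} [CommRing R] [IsDomain R]
    [Field K] [Algebra R K] [IsFractionRing R K] (s : SemistarOperation R K)
    (hstable : s.Stable) (hs : s.FiniteType) (I : Ideal R) (hI : I ≠ ⊥)
    (hne : s.contract I ≠ ⊤) :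
    s.starMin I = (s.contract I).minimalPrimes :=
  starMin_eq_minimalPrimes_contract_general s hs I hI
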